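/- Let μ, α : ℝ → ℝ be smooth functions satisfying 2μ'(t) + 2μ(t)² + α''(t) + α'(t)μ(t) = exp(α(t)) for all t. Let u : ℝ² → ℝ be a smooth function of (x,y) with u_x·u_y > 0 everywhere, satisfying u_xy = μ(u)·u_x·u_y at every point. Define v = ln(u_x·u_y) + α(u). Then v satisfies the Liouville equation v_xy = exp(v) at every point. -/

import Mathlib

/-- Partial derivative with respect to the first variable. -/
noncomputable def px (u : ℝ → ℝ → ℝ) : ℝ → ℝ → ℝ := fun x y => deriv (fun x' => u x' y) x

/-- Partial derivative with respect to the second variable. -/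
noncomputable def py (u : ℝ → ℝ → ℝ) : ℝ → ℝ → ℝ := fun x y => deriv (fun y' => u x y') y

section helpers

variable (G : ℝ → ℝ → ℝ)

lemma px_eq_fderiv (hG : ContDiff ℝ (⊤ : ℕ∞) fun p : ℝ × ℝ => G p.1 p.2) (x y : ℝ) :
    px G x y = fderiv ℝ (fun p : ℝ × ℝ => G p.1 p.2) (x, y) (1, 0) := by
  have hf : HasFDerivAt (fun p : ℝ × ℝ => G p.1 p.2)
      (fderiv ℝ (fun p : ℝ × ℝ => G p.1 p.2) (x, y)) (x, y) :=
    (hG.differentiable (by simp) (x, y)).hasFDerivAt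
  have hg : HasDerivAt (fun x' : ℝ => ((x', y) : ℝ × ℝ)) (1, 0) x :=
    (hasDerivAt_id x).prodMk (hasDerivAt_const x y)
  have := hf.comp_hasDerivAt x hg
  simpa [px, Function.comp_def] using this.deriv

lemma py_eq_fderiv (hG : ContDiff ℝ (⊤ : ℕ∞) fun p : ℝ × ℝ => G p.1 p.2) (x y : ℝ) :
    py G x y = fderiv ℝ (fun p : ℝ × ℝ => G p.1 p.2) (x, y) (0, 1) := by
  have hf : HasFDerivAt (fun p : ℝ × ℝ => G p.1 p.2)
      (fderiv ℝ (fun p : ℝ × ℝ => G p.1 p.2) (x, y)) (x, y) :=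
    (hG.differentiable (by simp) (x, y)).hasFDerivAt
  have hg : HasDerivAt (fun y' : ℝ => ((x, y') : ℝ × ℝ)) (0, 1) y :=
    (hasDerivAt_const y x).prodMk (hasDerivAt_id y)
  have := hf.comp_hasDerivAt y hg
  simpa [py, Function.comp_def] using this.deriv

lemma contDiff_px (hG : ContDiff ℝ (⊤ : ℕ∞) fun p : ℝ × ℝ => G p.1 p.2) :
    ContDiff ℝ (⊤ : ℕ∞) (fun p : ℝ × ℝ => px G p.1 p.2) := by
  have h2 : ContDiff ℝ (⊤ : ℕ∞) (fun p : ℝ × ℝ =>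
      fderiv ℝ (fun q : ℝ × ℝ => G q.1 q.2) p ((1 : ℝ), (0 : ℝ))) :=
    (hG.fderiv_right (by simp)).clm_apply contDiff_const
  have : (fun p : ℝ × ℝ => px G p.1 p.2) = fun p : ℝ × ℝ =>
      fderiv ℝ (fun q : ℝ × ℝ => G q.1 q.2) p ((1 : ℝ), (0 : ℝ)) :=
    funext fun p => px_eq_fderiv G hG p.1 p.2
  rw [this]; exact h2

lemma contDiff_py (hG : ContDiff ℝ (⊤ : ℕ∞) fun p : ℝ × ℝ => G p.1 p.2) :
    ContDiff ℝ (⊤ : ℕ∞) (fun p : ℝ × ℝ => py G p.1 p.2) := by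
  have h2 : ContDiff ℝ (⊤ : ℕ∞) (fun p : ℝ × ℝ =>
      fderiv ℝ (fun q : ℝ × ℝ => G q.1 q.2) p ((0 : ℝ), (1 : ℝ))) :=
    (hG.fderiv_right (by simp)).clm_apply contDiff_const
  have : (fun p : ℝ × ℝ => py G p.1 p.2) = fun p : ℝ × ℝ =>
      fderiv ℝ (fun q : ℝ × ℝ => G q.1 q.2) p ((0 : ℝ), (1 : ℝ)) :=
    funext fun p => py_eq_fderiv G hG p.1 p.2
  rw [this]; exact h2

lemma hasDerivAt_px (hG : ContDiff ℝ (⊤ : ℕ∞) fun p : ℝ × ℝ => G p.1 p.2) (x y : ℝ) :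
    HasDerivAt (fun x' => G x' y) (px G x y) x := by
  have hd : DifferentiableAt ℝ (fun x' => G x' y) x := by
    have : Differentiable ℝ (fun x' : ℝ => (fun p : ℝ × ℝ => G p.1 p.2) (x', y)) :=
      (hG.differentiable (by simp)).comp (differentiable_id.prodMk (differentiable_const y))
    exact this.differentiableAt
  exact hd.hasDerivAt

lemma hasDerivAt_py (hG : ContDiff ℝ (⊤ : ℕ∞) fun p : ℝ × ℝ => G p.1 p.2) (x y : ℝ) :
    HasDerivAt (fun y' => G x y') (py G x y) y := by
  have hd : DifferentiableAt ℝ (fun y' => G x y') y := by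
    have : Differentiable ℝ (fun y' : ℝ => (fun p : ℝ × ℝ => G p.1 p.2) (x, y')) :=
      (hG.differentiable (by simp)).comp ((differentiable_const x).prodMk differentiable_id)
    exact this.differentiableAt
  exact hd.hasDerivAt

lemma schwarz (hG : ContDiff ℝ (⊤ : ℕ∞) fun p : ℝ × ℝ => G p.1 p.2) (x y : ℝ) :
    px (py G) x y = py (px G) x y := by
  set F := fun p : ℝ × ℝ => G p.1 p.2 with hF
  have hFd : ∀ p, HasFDerivAt F (fderiv ℝ F p) p := fun p =>
    (hG.differentiable (by simp) p).hasFDerivAt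
  have hF' : Differentiable ℝ (fderiv ℝ F) :=
    (hG.fderiv_right (m := (⊤ : ℕ∞)) (by simp)).differentiable (by simp)
  have hsym := second_derivative_symmetric (f := F) (f' := fderiv ℝ F)
    (f'' := fderiv ℝ (fderiv ℝ F) (x, y)) hFd (hF' (x, y)).hasFDerivAt
  -- express each side via second fderiv
  have key : ∀ v w : ℝ × ℝ,
      fderiv ℝ (fun p => fderiv ℝ F p v) (x, y) w = fderiv ℝ (fderiv ℝ F) (x, y) w v := by
    intro v w
    have hc : HasFDerivAt (fun p => fderiv ℝ F p v)
        ((ContinuousLinearMap.apply ℝ ℝ v).comp (fderiv ℝ (fderiv ℝ F) (x, y))) (x, y) :=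
      (ContinuousLinearMap.apply ℝ ℝ v).hasFDerivAt.comp (x, y) (hF' (x, y)).hasFDerivAt
    rw [hc.fderiv]; rfl
  have h1 : px (py G) x y = fderiv ℝ (fderiv ℝ F) (x, y) (1, 0) (0, 1) := by
    have hpy : ContDiff ℝ (⊤ : ℕ∞) fun p : ℝ × ℝ => py G p.1 p.2 := contDiff_py G hG
    rw [px_eq_fderiv (py G) hpy x y]
    have : (fun p : ℝ × ℝ => py G p.1 p.2) = fun p => fderiv ℝ F p (0, 1) := by
      funext p; exact py_eq_fderiv G hG p.1 p.2
    rw [this, key]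
  have h2 : py (px G) x y = fderiv ℝ (fderiv ℝ F) (x, y) (0, 1) (1, 0) := by
    have hpx : ContDiff ℝ (⊤ : ℕ∞) fun p : ℝ × ℝ => px G p.1 p.2 := contDiff_px G hG
    rw [py_eq_fderiv (px G) hpx x y]
    have : (fun p : ℝ × ℝ => px G p.1 p.2) = fun p => fderiv ℝ F p (1, 0) := by
      funext p; exact px_eq_fderiv G hG p.1 p.2
    rw [this, key]
  rw [h1, h2, hsym]

end helpers

theorem stmt_7 (μ α : ℝ → ℝ) (hμ : ContDiff ℝ (⊤ : ℕ∞) μ) (hα : ContDiff ℝ (⊤ : ℕ∞) α)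
    (hode : ∀ t, 2 * deriv μ t + 2 * μ t ^ 2 + deriv (deriv α) t +
      deriv α t * μ t = Real.exp (α t))
    (u v : ℝ → ℝ → ℝ)
    (hu : ContDiff ℝ (⊤ : ℕ∞) (fun p : ℝ × ℝ => u p.1 p.2))
    (huxy : ∀ x y, 0 < px u x y * py u x y)
    (heq : ∀ x y, px (py u) x y = μ (u x y) * px u x y * py u x y)
    (hv : ∀ x y, v x y = Real.log (px u x y * py u x y) + α (u x y)) :
    ∀ x y, px (py v) x y = Real.exp (v x y) := by
  have hune : ∀ x y, px u x y ≠ 0 ∧ py u x y ≠ 0 := fun x y =>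
    mul_ne_zero_iff.mp (ne_of_gt (huxy x y))
  have hupx : ContDiff ℝ (⊤ : ℕ∞) (fun p : ℝ × ℝ => px u p.1 p.2) := contDiff_px u hu
  have hupy : ContDiff ℝ (⊤ : ℕ∞) (fun p : ℝ × ℝ => py u p.1 p.2) := contDiff_py u hu
  have hupyy : ContDiff ℝ (⊤ : ℕ∞) (fun p : ℝ × ℝ => py (py u) p.1 p.2) := contDiff_py _ hupy
  have hα' : ContDiff ℝ (⊤ : ℕ∞) (deriv α) := (contDiff_succ_iff_deriv.mp (hα.of_le (by simp))).2.2
  have hμd : Differentiable ℝ μ := hμ.differentiable (by simp)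
  have hαd : Differentiable ℝ α := hα.differentiable (by simp)
  have hα'd : Differentiable ℝ (deriv α) := hα'.differentiable (by simp)
  have hpyv : ∀ x y, py v x y = μ (u x y) * py u x y + py (py u) x y / py u x y
      + deriv α (u x y) * py u x y := by
    intro x y
    obtain ⟨hA, hB⟩ := hune x y
    have h1 : HasDerivAt (fun y' => u x y') (py u x y) y := hasDerivAt_py u hu x y
    have h2 : HasDerivAt (fun y' => px u x y') (px (py u) x y) y := by
      have := hasDerivAt_py (px u) hupx x y
      rwa [← schwarz u hu x y] at this
    have h3 : HasDerivAt (fun y' => py u x y') (py (py u) x y) y :=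
      hasDerivAt_py (py u) hupy x y
    have hlog := (h2.mul h3).log (ne_of_gt (huxy x y))
    have hαc : HasDerivAt (fun y' => α (u x y')) (deriv α (u x y) * py u x y) y :=
      (hαd (u x y)).hasDerivAt.comp y h1
    have htot := hlog.add hαc
    have hfun : (fun y' => v x y') = fun y' => Real.log (px u x y' * py u x y') + α (u x y') :=
      funext fun y' => hv x y'
    have hval : py v x y = (px (py u) x y * py u x y + px u x y * py (py u) x y) /
        (px u x y * py u x y) + deriv α (u x y) * py u x y := by
      show deriv (fun y' => v x y') y = _
      rw [hfun]
      exact htot.deriv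
    rw [hval, heq x y]
    field_simp
  intro x y
  obtain ⟨hA, hB⟩ := hune x y
  have h1 : HasDerivAt (fun x' => u x' y) (px u x y) x := hasDerivAt_px u hu x y
  have hμc : HasDerivAt (fun x' => μ (u x' y)) (deriv μ (u x y) * px u x y) x :=
    (hμd (u x y)).hasDerivAt.comp x h1
  have hα'c : HasDerivAt (fun x' => deriv α (u x' y)) (deriv (deriv α) (u x y) * px u x y) x :=
    by have := (hα'd (u x y)).hasDerivAt.comp x h1; exact this
  have h2 : HasDerivAt (fun x' => py u x' y) (px (py u) x y) x := hasDerivAt_px (py u) hupy x y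
  have h3' : py (px (py u)) x y = deriv μ (u x y) * py u x y * (px u x y * py u x y)
      + μ (u x y) * (px (py u) x y * py u x y + px u x y * py (py u) x y) := by
    have hy1 : HasDerivAt (fun y' => u x y') (py u x y) y := hasDerivAt_py u hu x y
    have hyμ : HasDerivAt (fun y' => μ (u x y')) (deriv μ (u x y) * py u x y) y :=
      (hμd (u x y)).hasDerivAt.comp y hy1
    have hy2 : HasDerivAt (fun y' => px u x y') (px (py u) x y) y := by
      have := hasDerivAt_py (px u) hupx x y
      rwa [← schwarz u hu x y] at this
    have hy3 : HasDerivAt (fun y' => py u x y') (py (py u) x y) y :=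
      hasDerivAt_py (py u) hupy x y
    have htot := hyμ.mul (hy2.mul hy3)
    have hfun : (fun y' => px (py u) x y') = fun y' => μ (u x y') * (px u x y' * py u x y') :=
      funext fun y' => by rw [heq x y', mul_assoc]
    show deriv (fun y' => px (py u) x y') y = _
    rw [hfun]
    exact htot.deriv
  have h3 : HasDerivAt (fun x' => py (py u) x' y)
      (deriv μ (u x y) * py u x y * (px u x y * py u x y)
        + μ (u x y) * (px (py u) x y * py u x y + px u x y * py (py u) x y)) x := by
    have := hasDerivAt_px (py (py u)) hupyy x y
    rwa [schwarz (py u) hupy x y, h3'] at this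
  have htot : HasDerivAt (fun x' => μ (u x' y) * py u x' y + py (py u) x' y / py u x' y
      + deriv α (u x' y) * py u x' y) _ x := ((hμc.mul h2).add (h3.div h2 hB)).add (hα'c.mul h2)
  have hfun : (fun x' => py v x' y) = fun x' => μ (u x' y) * py u x' y
      + py (py u) x' y / py u x' y + deriv α (u x' y) * py u x' y :=
    funext fun x' => hpyv x' y
  have hval : px (py v) x y = deriv (fun x' => py v x' y) x := rfl
  rw [hval, hfun, htot.deriv, hv x y, Real.exp_add, Real.exp_log (huxy x y), heq x y,
    ← hode (u x y)]
  field_simp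
  ring
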